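/- Assume G is abelian and let H be a closed subgroup of G with {e} ≠ H ≠ G. Then λ_{H,1} = 1, and for every n ≥ 2, λ_{H,n} = 2^n · λ̄_{H,n}, where λ̄_{H,n} denotes the number of H-trees on {1,…,n} having no one-leaf vertices (i.e., every internal vertex has at least two children). -/

import Mathlib

variable {G : Type*} [CommGroup G] {V : Type*} [AddCommGroup V] [Module ℂ V]

/-- The subspace `Fix(H)` of vectors fixed by every element of the subgroup `H`
under the representation `ρ`. -/
def fixedSpace (ρ : Representation ℂ G V) (H : Subgroup G) : Submodule ℂ V where
  carrier := {v | ∀ h ∈ H, ρ h v = v}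
  add_mem' := by
    intro a b ha hb h hh
    rw [map_add, ha h hh, hb h hh]
  zero_mem' := by
    intro h hh
    exact map_zero _
  smul_mem' := by
    intro c a ha h hh
    rw [map_smul, ha h hh]

/-- A subgroup `H ≤ G` is closed (w.r.t. `ρ`) if every subgroup `K` with `H ≤ K`
and `Fix(K) = Fix(H)` satisfies `K = H`. -/
def IsClosedSubgroup (ρ : Representation ℂ G V) (H : Subgroup G) : Prop :=
  ∀ K : Subgroup G, H ≤ K → fixedSpace ρ K = fixedSpace ρ H → K = H

open scoped Pointwise

/-- A vertex of a labelled forest on the leaf set `{1,…,n}` (encoded as `Fin n`):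
`leaves` is the set of leaves of the forest lying below the vertex, `label` is the
subgroup labelling the vertex, and, for a leaf `l` below the vertex, `coset l` is
the coset `g_l K` obtained by composing the edge labels on the path from the
vertex down to the leaf `l` (as in the paper, if the path carries, from the top,
the coset labels `a₁K, a₂K₂, …, a_lK_l`, then `coset l = a_l ⋯ a₂ a₁ K`); on
leaves not below the vertex, `coset` is `∅`.  Within the forests considered below
a vertex is uniquely determined by this data, and conversely the single-edge
labels are recovered from it, so this encoding is faithful. -/
structure FVertex (n : ℕ) (G : Type*) [Group G] where
  leaves : Finset (Fin n)
  label : Subgroup G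
  coset : Fin n → Set G

/-- `[P] ≤ [Q]` for conjugacy classes of subgroups: some `G`-conjugate of `P` is
contained in `Q`. -/
def ConjLE {G : Type*} [Group G] (P Q : Subgroup G) : Prop :=
  ∃ a : G, P.map (MulAut.conj a).toMonoidHom ≤ Q

/-- `[P] ≨ [Q]` (strictly). -/
def ConjLT {G : Type*} [Group G] (P Q : Subgroup G) : Prop :=
  ConjLE P Q ∧ ¬ ConjLE Q P

/-- `v` lies strictly below `w` in the forest: either the leaf set of `v` is
strictly smaller, or the leaf sets agree and the vertices lie on a common chain
of unique-child vertices, ordered by their labels. -/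
def FVertex.below {n : ℕ} {G : Type*} [Group G] (v w : FVertex n G) : Prop :=
  v.leaves ⊂ w.leaves ∨ (v.leaves = w.leaves ∧ ConjLT v.label w.label)

/-- `w` is a direct descendant (child) of `v` in the forest `F`. -/
def IsDirectChild {n : ℕ} {G : Type*} [Group G] (F : Set (FVertex n G))
    (w v : FVertex n G) : Prop :=
  w.below v ∧ ¬ ∃ u ∈ F, w.below u ∧ u.below v

/-- The forests of the family 𝓕(n,G,V): rooted oriented forests with leaves
labelled bijectively by `{1,…,n}` (isolated "fallen" leaves are allowed and are
implicit: they are the leaves lying below no vertex), at least one internal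
vertex, internal vertices labelled by closed subgroups of `G`, and edges labelled
by cosets, subject to conditions (1)-(5) of the paper.  A forest is encoded by
its set of internal vertices, each vertex carrying its leaf set, its subgroup
label and the composed coset data of the paths towards its leaves. -/
def IsFGForest {n : ℕ} (ρ : Representation ℂ G V) (F : Set (FVertex n G)) : Prop :=
  -- a finite forest with at least one internal vertex
  F.Finite ∧ F.Nonempty ∧
  -- every internal vertex has at least one leaf below it
  (∀ v ∈ F, v.leaves.Nonempty) ∧
  -- internal vertices are labelled by closed subgroups
  (∀ v ∈ F, IsClosedSubgroup ρ v.label) ∧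
  -- the leaf sets form a laminar family (forest structure)
  (∀ v ∈ F, ∀ w ∈ F, (v.leaves ∩ w.leaves).Nonempty →
      v.leaves ⊆ w.leaves ∨ w.leaves ⊆ v.leaves) ∧
  -- (1) if an internal vertex labelled P descends from one labelled Q, then [P] ≤ [Q]
  (∀ v ∈ F, ∀ w ∈ F, w.leaves ⊂ v.leaves → ConjLE w.label v.label) ∧
  -- (1)&(2) vertices with the same leaf set form a chain of unique children with
  -- strictly increasing labels (in particular a unique internal child has
  -- strictly smaller label class)
  (∀ v ∈ F, ∀ w ∈ F, v ≠ w → v.leaves = w.leaves →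
      ConjLT v.label w.label ∨ ConjLT w.label v.label) ∧
  -- (2) if a leaf is the unique child of a vertex, its label is not {e}
  (∀ v ∈ F, ∀ l : Fin n, v.leaves = {l} →
      (¬ ∃ w ∈ F, w ≠ v ∧ w.leaves = v.leaves ∧ ConjLT w.label v.label) →
      v.label ≠ ⊥) ∧
  -- (3) the label G appears in at most one tree, and a vertex labelled G has at
  -- most one direct descendant labelled G: the G-labelled vertices are pairwise
  -- comparable
  (∀ v ∈ F, ∀ w ∈ F, v.label = ⊤ → w.label = ⊤ → v = w ∨ v.below w ∨ w.below v) ∧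
  -- (4) the (composed) coset data consists of left cosets of the vertex label …
  (∀ v ∈ F, ∀ l ∈ v.leaves, ∃ a : G, v.coset l = a • (v.label : Set G)) ∧
  (∀ v ∈ F, ∀ l : Fin n, l ∉ v.leaves → v.coset l = ∅) ∧
  -- … and is compatible along edges: the edge from `v` (labelled Q) to a direct
  -- child `w` (labelled P) carries a coset label aQ with a⁻¹Pa ⊆ Q, and (by (5))
  -- the edge towards the child subtree containing the smallest leaf carries eQ
  (∀ v ∈ F, ∀ w ∈ F, IsDirectChild F w v →
      ∃ a : G, (w.label.map (MulAut.conj a⁻¹).toMonoidHom ≤ v.label) ∧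
        (∀ l ∈ w.leaves, v.coset l = w.coset l * (a • (v.label : Set G))) ∧
        (∀ hv : v.leaves.Nonempty, v.leaves.min' hv ∈ w.leaves → a ∈ v.label)) ∧
  -- (5) the composed coset towards the smallest leaf below a vertex is eK
  (∀ v ∈ F, ∀ hv : v.leaves.Nonempty, v.coset (v.leaves.min' hv) = (v.label : Set G))

/-- The set of roots (maximal vertices) of the forest `F`: each corresponds to a
tree of `F`. -/
def rootsOf {n : ℕ} {G : Type*} [Group G] (F : Set (FVertex n G)) :
    Set (FVertex n G) :=
  {v | v ∈ F ∧ ∀ w ∈ F, ¬ v.below w}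

open Classical in
/-- The fallen leaves of `F`: the leaves lying below no internal vertex. -/
noncomputable def fallenLeaves {n : ℕ} {G : Type*} [Group G]
    (F : Set (FVertex n G)) : Finset (Fin n) :=
  Finset.univ.filter fun l => ∀ v ∈ F, l ∉ v.leaves

/-- The number of connected components of `F` (trees and fallen leaves each count
as one component). -/
noncomputable def components {n : ℕ} {G : Type*} [Group G]
    (F : Set (FVertex n G)) : ℕ :=
  (rootsOf F).ncard + (fallenLeaves F).card

open Classical in
/-- The number of leaves of `F` attached to `H`-labelled vertices, i.e. whose
parent (the minimal internal vertex above them) is labelled `H`. -/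
noncomputable def attachedCount {n : ℕ} {G : Type*} [Group G]
    (F : Set (FVertex n G)) (H : Subgroup G) : ℕ :=
  (Finset.univ.filter fun l : Fin n => ∃ v ∈ F, l ∈ v.leaves ∧ v.label = H ∧
    ∀ w ∈ F, l ∈ w.leaves → (v = w ∨ v.below w)).card

/-- An `H`-tree on the leaf set `{1,…,m}`: a single rooted oriented tree, with
leaves bijectively labelled by `{1,…,m}`, all of whose internal vertices are
labelled by the (closed) subgroup `H`, with edges labelled by cosets of `H`,
normalized as in (5); every internal vertex has at least two children or a single
child which is a leaf (the latter only if `H ≠ {e}`). -/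
def IsHTree {m : ℕ} (ρ : Representation ℂ G V) (H : Subgroup G)
    (F : Set (FVertex m G)) : Prop :=
  IsFGForest ρ F ∧ (∀ v ∈ F, v.label = H) ∧ ∃ v ∈ F, v.leaves = Finset.univ

/-- `λ_{H,i}`: the number of `H`-trees on the leaf set `{1,…,i}`. -/
noncomputable def lamHT (ρ : Representation ℂ G V) (H : Subgroup G) (i : ℕ) : ℕ :=
  Nat.card {F : Set (FVertex i G) // IsHTree ρ H F}

/-!
Because `G` is abelian, conjugation fixes every subgroup, so inside an `H`-tree all labels
coincide, `ConjLE`/`ConjLT` collapse to `≤`/`<`, and a vertex is determined by its leaf set.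
A one-leaf vertex above the leaf `l` is then completely forced (its coset datum is `eH` by
the normalization (5)), and it never obstructs the edge conditions between the other vertices.
Hence, for `n ≥ 2`, deleting all one-leaf vertices yields an `H`-tree without one-leaf
vertices (the root has `n` leaves and survives), and conversely one-leaf vertices can be
attached above an arbitrary subset of the `n` leaves: `H ≠ {e}` permits them and `H ≠ G`
keeps condition (3) vacuous. This bijection gives the factor `2 ^ n`. For `n = 1` the only
`H`-tree is the single one-leaf vertex.
-/

lemma Subgroup.map_conj_eq_self (a : G) (P : Subgroup G) :
    P.map (MulAut.conj a).toMonoidHom = P := by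
  ext x
  simp

lemma conjLE_iff_le {P Q : Subgroup G} : ConjLE P Q ↔ P ≤ Q := by
  simp only [ConjLE, Subgroup.map_conj_eq_self, exists_const]

lemma not_conjLT_self (P : Subgroup G) : ¬ ConjLT P P :=
  fun h => h.2 (conjLE_iff_le.mpr le_rfl)

section Group

variable {G : Type*} [Group G] {n : ℕ}

lemma FVertex.ext {v w : FVertex n G} (hleaves : v.leaves = w.leaves)
    (hlabel : v.label = w.label) (hcoset : v.coset = w.coset) : v = w := by
  cases v
  cases w
  simp_all

/-- The one-leaf vertex labelled `H` above the leaf `l`, with the coset datum forced by (5). -/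
def FVertex.single (H : Subgroup G) (l : Fin n) : FVertex n G :=
  ⟨{l}, H, fun m => if m = l then (H : Set G) else ∅⟩

namespace FVertex

variable (H : Subgroup G)

@[simp] lemma single_leaves (l : Fin n) : (single H l).leaves = {l} := rfl

@[simp] lemma single_label (l : Fin n) : (single H l).label = H := rfl

@[simp] lemma single_coset_self (l : Fin n) : (single H l).coset l = H := if_pos rfl

lemma single_coset_of_ne {l m : Fin n} (h : m ≠ l) : (single H l).coset m = ∅ := if_neg h

lemma single_injective : Function.Injective (single (n := n) H) :=
  fun _ _ h => Finset.singleton_injective (congrArg leaves h)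

lemma single_coset_eq_smul {l m : Fin n} (hm : m ∈ (single H l).leaves) :
    ∃ a : G, (single H l).coset m = a • ((single H l).label : Set G) :=
  ⟨1, by rw [Finset.mem_singleton.mp hm, single_coset_self, single_label, one_smul]⟩

lemma single_coset_of_notMem {l m : Fin n} (hm : m ∉ (single H l).leaves) :
    (single H l).coset m = ∅ :=
  single_coset_of_ne H (by simpa using hm)

lemma single_coset_min' (l : Fin n) (h : (single H l).leaves.Nonempty) :
    (single H l).coset ((single H l).leaves.min' h) = (single H l).label := by
  simp

end FVertex

lemma IsDirectChild.of_subset {F' F : Set (FVertex n G)} (hsub : F' ⊆ F)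
    {w v : FVertex n G} (h : IsDirectChild F w v) : IsDirectChild F' w v :=
  ⟨h.1, fun ⟨u, hu, hwu, huv⟩ => h.2 ⟨u, hsub hu, hwu, huv⟩⟩

def removeOneLeaf (F : Set (FVertex n G)) : Set (FVertex n G) :=
  {v ∈ F | 2 ≤ v.leaves.card}

open Classical in
noncomputable def oneLeafSupport (H : Subgroup G) (F : Set (FVertex n G)) : Finset (Fin n) :=
  Finset.univ.filter fun l => FVertex.single H l ∈ F

def addOneLeaf (H : Subgroup G) (S : Finset (Fin n)) (F : Set (FVertex n G)) :
    Set (FVertex n G) :=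
  F ∪ FVertex.single H '' S

variable {H : Subgroup G} {S : Finset (Fin n)} {F : Set (FVertex n G)}

lemma mem_addOneLeaf {v : FVertex n G} :
    v ∈ addOneLeaf H S F ↔ v ∈ F ∨ ∃ l ∈ S, FVertex.single H l = v := by
  simp [addOneLeaf]

lemma laminar_addOneLeaf
    (hF : ∀ v ∈ F, ∀ w ∈ F, (v.leaves ∩ w.leaves).Nonempty →
      v.leaves ⊆ w.leaves ∨ w.leaves ⊆ v.leaves) :
    ∀ v ∈ addOneLeaf H S F, ∀ w ∈ addOneLeaf H S F, (v.leaves ∩ w.leaves).Nonempty →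
      v.leaves ⊆ w.leaves ∨ w.leaves ⊆ v.leaves := by
  intro v hv w hw ⟨x, hx⟩
  rw [Finset.mem_inter] at hx
  rcases mem_addOneLeaf.mp hv with hv | ⟨l, -, rfl⟩
  · rcases mem_addOneLeaf.mp hw with hw | ⟨m, -, rfl⟩
    · exact hF v hv w hw ⟨x, Finset.mem_inter.mpr hx⟩
    · obtain rfl : x = m := Finset.mem_singleton.mp hx.2
      exact Or.inr (Finset.singleton_subset_iff.mpr hx.1)
  · obtain rfl : x = l := Finset.mem_singleton.mp hx.1
    exact Or.inl (Finset.singleton_subset_iff.mpr hx.2)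

lemma leaves_injOn_addOneLeaf (hbig : ∀ v ∈ F, 2 ≤ v.leaves.card)
    (hinj : Set.InjOn FVertex.leaves F) : Set.InjOn FVertex.leaves (addOneLeaf H S F) := by
  intro v hv w hw hvw
  rcases mem_addOneLeaf.mp hv with hv | ⟨l, -, rfl⟩ <;>
    rcases mem_addOneLeaf.mp hw with hw | ⟨m, -, rfl⟩
  · exact hinj hv hw hvw
  · exact absurd (hbig v hv) (by simp [hvw])
  · exact absurd (hbig w hw) (by simp [← hvw])
  · rw [Finset.singleton_injective hvw]

lemma oneLeafSupport_addOneLeaf (hbig : ∀ v ∈ F, 2 ≤ v.leaves.card) :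
    oneLeafSupport H (addOneLeaf H S F) = S := by
  ext l
  simp only [oneLeafSupport, Finset.mem_filter, Finset.mem_univ, true_and, mem_addOneLeaf]
  constructor
  · rintro (h | ⟨l', hl', he⟩)
    · simpa using hbig _ h
    · rwa [FVertex.single_injective H he] at hl'
  · exact fun h => Or.inr ⟨l, h, rfl⟩

lemma removeOneLeaf_addOneLeaf (hbig : ∀ v ∈ F, 2 ≤ v.leaves.card) :
    removeOneLeaf (addOneLeaf H S F) = F := by
  ext v
  constructor
  · rintro ⟨hv, hcard⟩
    rcases mem_addOneLeaf.mp hv with hv | ⟨l, -, rfl⟩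
    · exact hv
    · simp at hcard
  · exact fun hv => ⟨Or.inl hv, hbig v hv⟩

end Group

variable {n : ℕ}

lemma FVertex.below_iff_ssubset {v w : FVertex n G} (h : v.label = w.label) :
    v.below w ↔ v.leaves ⊂ w.leaves := by
  refine ⟨?_, Or.inl⟩
  rintro (hlt | ⟨-, hlt⟩)
  · exact hlt
  · exact absurd (h ▸ hlt) (not_conjLT_self _)

lemma FVertex.not_below_of_leaves_eq_singleton {w u : FVertex n G} {l : Fin n}
    (hlabel : w.label = u.label) (hu : u.leaves = {l}) (hw : w.leaves.Nonempty) :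
    ¬ w.below u := by
  rw [FVertex.below_iff_ssubset hlabel, hu, Finset.ssubset_singleton_iff]
  exact hw.ne_empty

variable {ρ : Representation ℂ G V} {H : Subgroup G} {F : Set (FVertex n G)}

namespace IsHTree

lemma leaves_nonempty (hF : IsHTree ρ H F) {v : FVertex n G} (hv : v ∈ F) : v.leaves.Nonempty :=
  hF.1.2.2.1 v hv

lemma leaves_injOn (hF : IsHTree ρ H F) : Set.InjOn FVertex.leaves F := by
  intro v hv w hw hvw
  by_contra hne
  obtain ⟨⟨-, -, -, -, -, -, hchain, -⟩, hlabel, -⟩ := hF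
  rcases hchain v hv w hw hne hvw with h | h <;>
    exact not_conjLT_self H (by rwa [hlabel v hv, hlabel w hw] at h)

lemma eq_single (hF : IsHTree ρ H F) {v : FVertex n G} (hv : v ∈ F) {l : Fin n}
    (hl : v.leaves = {l}) : v = FVertex.single H l := by
  obtain ⟨⟨-, -, -, -, -, -, -, -, -, -, hempty, -, hmin⟩, hlabel, -⟩ := hF
  have hne : v.leaves.Nonempty := hl ▸ Finset.singleton_nonempty l
  have hmin_eq : v.leaves.min' hne = l := Finset.mem_singleton.mp (hl ▸ v.leaves.min'_mem hne)
  refine FVertex.ext hl (hlabel v hv) (funext fun m => ?_)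
  rcases eq_or_ne m l with rfl | hm
  · rw [FVertex.single_coset_self, ← hlabel v hv, ← hmin_eq, hmin v hv hne]
  · rw [FVertex.single_coset_of_ne H hm, hempty v hv m (by simpa [hl] using hm)]

lemma eq_singleton_single {F : Set (FVertex 1 G)} (hF : IsHTree ρ H F) :
    F = {FVertex.single H 0} := by
  have hleaves : ∀ v ∈ F, v.leaves = {0} :=
    fun v hv => (hF.leaves_nonempty hv).eq_univ.trans Finset.univ_unique
  obtain ⟨r, hr, -⟩ := hF.2.2
  refine Set.eq_singleton_iff_unique_mem.mpr ⟨?_, fun v hv => hF.eq_single hv (hleaves v hv)⟩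
  exact hF.eq_single hr (hleaves r hr) ▸ hr

lemma edge_to_single (hF : IsHTree ρ H F) {v : FVertex n G} (hv : v ∈ F) {m : Fin n}
    (hm : m ∈ v.leaves) :
    ∃ a : G, (FVertex.single H m).label.map (MulAut.conj a⁻¹).toMonoidHom ≤ v.label ∧
      (∀ l ∈ (FVertex.single H m).leaves,
        v.coset l = (FVertex.single H m).coset l * (a • (v.label : Set G))) ∧
      (∀ hv : v.leaves.Nonempty, v.leaves.min' hv ∈ (FVertex.single H m).leaves →
        a ∈ v.label) := by
  obtain ⟨⟨-, -, -, -, -, -, -, -, -, hcoset, -, -, hmin⟩, hlabel, -⟩ := hF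
  obtain ⟨a, ha⟩ := hcoset v hv m hm
  rw [hlabel v hv] at ha
  refine ⟨a, by rw [FVertex.single_label, Subgroup.map_conj_eq_self, hlabel v hv], ?_, ?_⟩
  · intro l hl
    rw [Finset.mem_singleton.mp hl, FVertex.single_coset_self, hlabel v hv, mul_smul_comm,
      coe_mul_coe, ha]
  · intro hne hmem
    have hmin_eq := hmin v hv hne
    rw [Finset.mem_singleton.mp hmem, ha, hlabel v hv] at hmin_eq
    rw [hlabel v hv]
    exact mem_leftCoset_leftCoset H.toSubmonoid hmin_eq

end IsHTree

lemma IsDirectChild.of_removeOneLeaf (hlabel : ∀ u ∈ F, u.label = H)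
    (hne : ∀ u ∈ F, u.leaves.Nonempty) {w v : FVertex n G} (hw : w ∈ F)
    (h : IsDirectChild (removeOneLeaf F) w v) : IsDirectChild F w v := by
  refine ⟨h.1, fun ⟨u, hu, hwu, huv⟩ => ?_⟩
  rcases (hne u hu).exists_eq_singleton_or_nontrivial with ⟨l, hl⟩ | hnt
  · exact FVertex.not_below_of_leaves_eq_singleton ((hlabel w hw).trans (hlabel u hu).symm)
      hl (hne w hw) hwu
  · exact h.2 ⟨u, ⟨hu, Finset.one_lt_card_iff_nontrivial.mpr hnt⟩, hwu, huv⟩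

lemma isHTree_removeOneLeaf (hF : IsHTree ρ H F) (hn : 2 ≤ n) :
    IsHTree ρ H (removeOneLeaf F) := by
  obtain ⟨⟨hfin, -, hne, hclosed, hlam, hconj, hchain, -, htopc, hcoset, hempty, hedge, hmin⟩,
    hlabel, r, hr, hroot⟩ := hF
  have hsub : removeOneLeaf F ⊆ F := fun v hv => hv.1
  have hr' : r ∈ removeOneLeaf F := ⟨hr, by simpa [hroot] using hn⟩
  refine ⟨⟨hfin.subset hsub, ⟨r, hr'⟩, fun v hv => hne v (hsub hv),
      fun v hv => hclosed v (hsub hv), fun v hv w hw => hlam v (hsub hv) w (hsub hw),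
      fun v hv w hw => hconj v (hsub hv) w (hsub hw),
      fun v hv w hw => hchain v (hsub hv) w (hsub hw), ?_,
      fun v hv w hw => htopc v (hsub hv) w (hsub hw), fun v hv => hcoset v (hsub hv),
      fun v hv => hempty v (hsub hv), ?_, fun v hv => hmin v (hsub hv)⟩,
    fun v hv => hlabel v (hsub hv), r, hr', hroot⟩
  · intro v hv l hl _
    simpa [hl] using hv.2
  · intro v hv w hw hvw
    exact hedge v (hsub hv) w (hsub hw) (hvw.of_removeOneLeaf hlabel hne (hsub hw))

lemma isHTree_addOneLeaf (hH : IsClosedSubgroup ρ H) (hbot : H ≠ ⊥) (htop : H ≠ ⊤)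
    (S : Finset (Fin n)) (hF : IsHTree ρ H F) (hbig : ∀ v ∈ F, 2 ≤ v.leaves.card) :
    IsHTree ρ H (addOneLeaf H S F) := by
  have hinj := leaves_injOn_addOneLeaf (H := H) (S := S) hbig hF.leaves_injOn
  obtain ⟨hfin, -, hne, -, hlam, -, -, -, -, hcoset, hempty, hedge, hmin⟩ := hF.1
  obtain ⟨hlabel, r, hr, hroot⟩ := hF.2
  have hsub : F ⊆ addOneLeaf H S F := Set.subset_union_left
  have hlabel' : ∀ v ∈ addOneLeaf H S F, v.label = H := by
    intro v hv
    rcases mem_addOneLeaf.mp hv with hv | ⟨l, -, rfl⟩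
    exacts [hlabel v hv, rfl]
  have hne' : ∀ v ∈ addOneLeaf H S F, v.leaves.Nonempty := by
    intro v hv
    rcases mem_addOneLeaf.mp hv with hv | ⟨l, -, rfl⟩
    exacts [hne v hv, Finset.singleton_nonempty l]
  refine ⟨⟨hfin.union (S.finite_toSet.image _), ⟨r, hsub hr⟩, hne',
      fun v hv => hlabel' v hv ▸ hH, laminar_addOneLeaf hlam,
      fun v hv w hw _ => conjLE_iff_le.mpr (by rw [hlabel' v hv, hlabel' w hw]),
      fun v hv w hw hvw hl => absurd (hinj hv hw hl) hvw,
      fun v hv _ _ _ => hlabel' v hv ▸ hbot,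
      fun v hv _ _ hv_top _ => absurd ((hlabel' v hv).symm.trans hv_top) htop,
      ?_, ?_, ?_, ?_⟩, hlabel', r, hsub hr, hroot⟩
  all_goals intro v hv
  all_goals rcases mem_addOneLeaf.mp hv with hv | ⟨l, -, rfl⟩
  · exact hcoset v hv
  · exact fun _ => FVertex.single_coset_eq_smul H
  · exact hempty v hv
  · exact fun _ => FVertex.single_coset_of_notMem H
  · intro w hw hwv
    rcases mem_addOneLeaf.mp hw with hw | ⟨m, -, rfl⟩
    · exact hedge v hv w hw (hwv.of_subset hsub)
    · have hm := ((FVertex.below_iff_ssubset (hlabel v hv).symm).mp hwv.1).subset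
      exact hF.edge_to_single hv (hm (Finset.mem_singleton_self m))
  · intro w hw hwv
    exact absurd hwv.1
      (FVertex.not_below_of_leaves_eq_singleton (hlabel' w hw) rfl (hne' w hw))
  · exact hmin v hv
  · exact FVertex.single_coset_min' H l

lemma addOneLeaf_removeOneLeaf (hF : IsHTree ρ H F) :
    addOneLeaf H (oneLeafSupport H F) (removeOneLeaf F) = F := by
  ext v
  rw [mem_addOneLeaf]
  constructor
  · rintro (hv | ⟨l, hl, rfl⟩)
    · exact hv.1
    · simpa [oneLeafSupport] using hl
  · intro hv
    rcases (hF.leaves_nonempty hv).exists_eq_singleton_or_nontrivial with ⟨l, hl⟩ | hnt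
    · have hv_eq := hF.eq_single hv hl
      refine Or.inr ⟨l, ?_, hv_eq.symm⟩
      simpa [oneLeafSupport, ← hv_eq] using hv
    · exact Or.inl ⟨hv, Finset.one_lt_card_iff_nontrivial.mpr hnt⟩

noncomputable def htreeEquivProd (hn : 2 ≤ n) (hH : IsClosedSubgroup ρ H) (hbot : H ≠ ⊥)
    (htop : H ≠ ⊤) :
    {F : Set (FVertex n G) // IsHTree ρ H F} ≃ Finset (Fin n) ×
      {F : Set (FVertex n G) // IsHTree ρ H F ∧ ∀ v ∈ F, 2 ≤ v.leaves.card} where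
  toFun F := (oneLeafSupport H F.1, ⟨removeOneLeaf F.1, isHTree_removeOneLeaf F.2 hn,
    fun _ hv => hv.2⟩)
  invFun p := ⟨addOneLeaf H p.1 p.2.1, isHTree_addOneLeaf hH hbot htop p.1 p.2.2.1 p.2.2.2⟩
  left_inv F := Subtype.ext (addOneLeaf_removeOneLeaf F.2)
  right_inv p := Prod.ext (oneLeafSupport_addOneLeaf p.2.2.2)
    (Subtype.ext (removeOneLeaf_addOneLeaf p.2.2.2))

lemma isHTree_singleton_single (hH : IsClosedSubgroup ρ H) (hbot : H ≠ ⊥) :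
    IsHTree ρ H ({FVertex.single H 0} : Set (FVertex 1 G)) := by
  have hne : (FVertex.single H (0 : Fin 1)).leaves.Nonempty := Finset.singleton_nonempty 0
  refine ⟨⟨Set.finite_singleton _, Set.singleton_nonempty _, ?_, ?_, ?_, ?_, ?_, ?_, ?_, ?_, ?_,
    ?_, ?_⟩, ?_, _, rfl, Finset.univ_unique.symm⟩
  all_goals try rintro v rfl
  all_goals try rintro w rfl
  · exact hne
  · exact hH
  · exact fun _ => Or.inl subset_rfl
  · exact fun _ => conjLE_iff_le.mpr le_rfl
  · exact fun hvw => absurd rfl hvw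
  · exact fun _ _ _ => hbot
  · exact fun _ _ => Or.inl rfl
  · exact fun _ => FVertex.single_coset_eq_smul H
  · exact fun _ => FVertex.single_coset_of_notMem H
  · exact fun hwv => absurd hwv.1 (FVertex.not_below_of_leaves_eq_singleton rfl rfl hne)
  · exact FVertex.single_coset_min' H 0
  · rfl

theorem lamHT_eq_two_pow_mul_general
    (ρ : Representation ℂ G V)
    (H : Subgroup G) (hH : IsClosedSubgroup ρ H) (hbot : H ≠ ⊥) (htop : H ≠ ⊤) :
    lamHT ρ H 1 = 1 ∧
    ∀ n : ℕ, 2 ≤ n →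
      lamHT ρ H n =
        2 ^ n * Nat.card {F : Set (FVertex n G) // IsHTree ρ H F ∧
          ∀ v ∈ F, 2 ≤ v.leaves.card} := by
  refine ⟨?_, fun n hn => ?_⟩
  · rw [lamHT, Nat.card_eq_one_iff_unique]
    exact ⟨⟨fun F F' =>
      Subtype.ext (F.2.eq_singleton_single.trans F'.2.eq_singleton_single.symm)⟩,
      ⟨⟨_, isHTree_singleton_single hH hbot⟩⟩⟩
  · rw [lamHT, Nat.card_congr (htreeEquivProd hn hH hbot htop), Nat.card_prod]
    simp [Nat.card_eq_fintype_card]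

theorem lamHT_eq_two_pow_mul
    [Fintype G] [FiniteDimensional ℂ V] (ρ : Representation ℂ G V)
    (hfaith : Function.Injective ρ) (hfix : fixedSpace ρ ⊤ = ⊥)
    (H : Subgroup G) (hH : IsClosedSubgroup ρ H) (hbot : H ≠ ⊥) (htop : H ≠ ⊤) :
    lamHT ρ H 1 = 1 ∧
    ∀ n : ℕ, 2 ≤ n →
      lamHT ρ H n =
        2 ^ n * Nat.card {F : Set (FVertex n G) // IsHTree ρ H F ∧
          ∀ v ∈ F, 2 ≤ v.leaves.card} :=
  lamHT_eq_two_pow_mul_general ρ H hH hbot htop
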